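/- Higher-order Schwarz problem, uniqueness (homogeneous case). Let n ≥ 1 and let w : D → ℂ be a function on the open unit disk such that the iterated Wirtinger derivatives ∂^k w/∂z̄^k exist and are continuous on D for 0 ≤ k ≤ n, and suppose: ∂ⁿw/∂z̄ⁿ = 0 on D; for each 0 ≤ k ≤ n−1 and every θ₀ ∈ ℝ, Re(∂^k w/∂z̄^k)(z) → 0 as z → e^{iθ₀} within D; and Im(∂^k w/∂z̄^k)(0) = 0 for each 0 ≤ k ≤ n−1. Then w is identically zero on D. -/

import Mathlib

/-!
By induction on `n`, applied to `∂w/∂z̄`, it suffices to treat `n = 1`: then `w` is holomorphic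
on the disk and `Re w → 0` at the boundary. The maximum modulus principle for `exp w` and
`exp (-w)` (with `Re w` extended by `0` to the closed disk, where it attains its extrema) forces
`Re w = 0`; by the open mapping theorem `w` is then constant, and `Im w(0) = 0` makes it `0`.
-/

open Complex Real Metric Filter

noncomputable def unitDisk : Set ℂ := Metric.ball (0 : ℂ) 1

/-- The Wirtinger derivative `∂/∂z̄` as an operator on functions. -/
noncomputable def wdzbarOp (f : ℂ → ℂ) : ℂ → ℂ := fun z =>
  (1 / 2) * ((fderiv ℝ f z) 1 + Complex.I * (fderiv ℝ f z) Complex.I)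

open Set Topology

theorem differentiableAt_complex_of_wdzbarOp_eq_zero {f : ℂ → ℂ} {z : ℂ}
    (hf : DifferentiableAt ℝ f z) (h : wdzbarOp f z = 0) : DifferentiableAt ℂ f z := by
  refine differentiableAt_complex_iff_differentiableAt_real.2 ⟨hf, ?_⟩
  simp only [wdzbarOp, smul_eq_mul] at h ⊢
  linear_combination (-2 * I) * h + fderiv ℝ f z I * I_sq

theorem continuousOn_closure_indicator {X M : Type*} [TopologicalSpace X] [TopologicalSpace M]
    [Zero M] {U : Set X} {g : X → M} (hU : IsOpen U) (hg : ContinuousOn g U)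
    (hfr : ∀ ζ ∈ frontier U, Tendsto g (𝓝[U] ζ) (𝓝 0)) :
    ContinuousOn (U.indicator g) (closure U) := by
  intro ζ hζ
  by_cases hζU : ζ ∈ U
  · refine ((hg.continuousAt (hU.mem_nhds hζU)).congr ?_).continuousWithinAt
    filter_upwards [hU.mem_nhds hζU] with z hz using (indicator_of_mem hz g).symm
  · have hζfr : ζ ∈ frontier U := ⟨hζ, by rwa [hU.interior_eq]⟩
    have hlim : Tendsto (U.indicator g) (𝓝[U] ζ ⊔ 𝓝[Uᶜ] ζ) (𝓝 0) :=
      ((hfr ζ hζfr).congr' (eventually_nhdsWithin_of_forall fun z hz =>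
        (indicator_of_mem hz g).symm)).sup
      (tendsto_const_nhds.congr' (eventually_nhdsWithin_of_forall fun z hz =>
        (indicator_of_notMem hz g).symm))
    rw [← nhdsWithin_union, union_compl_self, nhdsWithin_univ] at hlim
    rw [ContinuousWithinAt, indicator_of_notMem hζU]
    exact hlim.mono_left nhdsWithin_le_nhds

theorem re_nonpos_of_tendsto_re_frontier {U : Set ℂ} {f : ℂ → ℂ} (hUb : Bornology.IsBounded U)
    (hUo : IsOpen U) (hUc : IsPreconnected U) (hf : DifferentiableOn ℂ f U)
    (hfr : ∀ ζ ∈ frontier U, Tendsto (fun z => (f z).re) (𝓝[U] ζ) (𝓝 0)) :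
    ∀ z ∈ U, (f z).re ≤ 0 := by
  intro z hz
  obtain ⟨z₀, -, hmax⟩ := hUb.isCompact_closure.exists_isMaxOn ⟨z, subset_closure hz⟩
    (continuousOn_closure_indicator (g := fun z => (f z).re) hUo
      (continuous_re.comp_continuousOn hf.continuousOn) hfr)
  set u : ℂ → ℝ := U.indicator fun z => (f z).re
  have hu : ∀ z ∈ U, u z = (f z).re := fun z hz => indicator_of_mem hz _
  suffices u z₀ ≤ 0 from (hu z hz).symm.le.trans ((hmax (subset_closure hz)).trans this)
  by_contra! hpos
  have hz₀U : z₀ ∈ U := by_contra fun h => hpos.ne' (indicator_of_notMem h _)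
  have hexp_max : IsMaxOn (norm ∘ fun z => exp (f z)) U z₀ := isMaxOn_iff.2 fun z hz => by
    simpa only [Function.comp_apply, norm_exp, Real.exp_le_exp, hu z hz, hu z₀ hz₀U]
      using isMaxOn_iff.1 hmax z (subset_closure hz)
  have hconst : ∀ z ∈ U, (f z).re = (f z₀).re := fun z hz => by
    simpa [norm_exp] using norm_eqOn_of_isPreconnected_of_isMaxOn hUc hUo hf.cexp hz₀U hexp_max hz
  obtain ⟨ζ, hζ⟩ : (frontier U).Nonempty :=
    nonempty_frontier_iff.2 ⟨⟨z, hz⟩, fun h => NormedSpace.unbounded_univ ℂ ℂ (h ▸ hUb)⟩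
  have : NeBot (𝓝[U] ζ) := mem_closure_iff_nhdsWithin_neBot.1 (frontier_subset_closure hζ)
  have hlim : Tendsto (fun z => (f z).re) (𝓝[U] ζ) (𝓝 (f z₀).re) :=
    tendsto_const_nhds.congr' (eventually_nhdsWithin_of_forall fun z hz => (hconst z hz).symm)
  exact hpos.ne' ((hu z₀ hz₀U).trans (tendsto_nhds_unique hlim (hfr ζ hζ)))

theorem exists_eqOn_const_of_re_eq_zero {U : Set ℂ} {f : ℂ → ℂ} (hUo : IsOpen U)
    (hUc : IsPreconnected U) (hf : DifferentiableOn ℂ f U) (hre : ∀ z ∈ U, (f z).re = 0) :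
    ∃ c, ∀ z ∈ U, f z = c := by
  rcases U.eq_empty_or_nonempty with rfl | ⟨z, hz⟩
  · exact ⟨0, by simp⟩
  refine ((hf.analyticOnNhd hUo).is_constant_or_isOpen hUc).resolve_right fun hopen => ?_
  have himage : f '' U ⊆ interior {w : ℂ | w.re ≤ 0} :=
    interior_maximal (by rintro _ ⟨z, hz, rfl⟩; exact (hre z hz).le) (hopen U subset_rfl hUo)
  simpa [hre z hz] using himage (mem_image_of_mem f hz)

theorem eqOn_zero_of_tendsto_re_frontier {U : Set ℂ} {f : ℂ → ℂ} {z₀ : ℂ}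
    (hUb : Bornology.IsBounded U) (hUo : IsOpen U) (hUc : IsPreconnected U)
    (hf : DifferentiableOn ℂ f U) (hz₀ : z₀ ∈ U) (him : (f z₀).im = 0)
    (hfr : ∀ ζ ∈ frontier U, Tendsto (fun z => (f z).re) (𝓝[U] ζ) (𝓝 0)) :
    ∀ z ∈ U, f z = 0 := by
  have hre : ∀ z ∈ U, (f z).re = 0 := fun z hz => by
    have hneg := re_nonpos_of_tendsto_re_frontier hUb hUo hUc hf.neg
      (fun ζ hζ => by simpa using (hfr ζ hζ).neg) z hz
    rw [Pi.neg_apply, neg_re, neg_nonpos] at hneg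
    exact le_antisymm (re_nonpos_of_tendsto_re_frontier hUb hUo hUc hf hfr z hz) hneg
  obtain ⟨c, hc⟩ := exists_eqOn_const_of_re_eq_zero hUo hUc hf hre
  have hc0 : c = 0 := hc z₀ hz₀ ▸ Complex.ext (hre z₀ hz₀) him
  exact fun z hz => (hc z hz).trans hc0

theorem exists_exp_eq_of_mem_frontier_unitDisk {ζ : ℂ} (hζ : ζ ∈ frontier unitDisk) :
    ∃ θ : ℝ, exp (I * θ) = ζ := by
  rw [unitDisk, frontier_ball 0 one_ne_zero, mem_sphere_zero_iff_norm, norm_eq_one_iff] at hζ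
  simpa only [mul_comm I] using hζ

theorem higher_schwarz_uniqueness_general (n : ℕ) (w : ℂ → ℂ)
    (hdiff : ∀ k < n, ∀ z ∈ unitDisk, DifferentiableAt ℝ (wdzbarOp^[k] w) z)
    (heq : ∀ z ∈ unitDisk, wdzbarOp^[n] w z = 0)
    (hbd : ∀ k < n, ∀ θ₀ : ℝ,
      Tendsto (fun z => (wdzbarOp^[k] w z).re)
        (nhdsWithin (Complex.exp (Complex.I * θ₀)) unitDisk) (nhds 0))
    (him : ∀ k < n, (wdzbarOp^[k] w 0).im = 0) :
    ∀ z ∈ unitDisk, w z = 0 := by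
  induction n generalizing w with
  | zero => exact heq
  | succ n ih =>
    have hw : ∀ z ∈ unitDisk, wdzbarOp w z = 0 :=
      ih (wdzbarOp w) (fun k hk => hdiff (k + 1) (by omega)) heq
        (fun k hk => hbd (k + 1) (by omega)) (fun k hk => him (k + 1) (by omega))
    have hhol : DifferentiableOn ℂ w unitDisk := fun z hz =>
      (differentiableAt_complex_of_wdzbarOp_eq_zero (hdiff 0 n.succ_pos z hz)
        (hw z hz)).differentiableWithinAt
    refine eqOn_zero_of_tendsto_re_frontier (isBounded_ball (x := 0) (r := 1)) isOpen_ball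
      (convex_ball 0 1).isPreconnected hhol (mem_ball_self one_pos) (him 0 n.succ_pos)
      fun ζ hζ => ?_
    obtain ⟨θ, rfl⟩ := exists_exp_eq_of_mem_frontier_unitDisk hζ
    exact hbd 0 n.succ_pos θ

/-- Uniqueness for the higher-order Schwarz problem (homogeneous case): a function on the unit
disk whose iterated `∂/∂z̄`-derivatives up to order `n` exist and are continuous on the disk,
which satisfies `∂ⁿw/∂z̄ⁿ = 0`, whose derivatives of order `k < n` have real parts tending
to `0` at every boundary point and imaginary parts vanishing at the origin, is identically
zero. -/
theorem higher_schwarz_uniqueness (n : ℕ) (hn : 1 ≤ n) (w : ℂ → ℂ)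
    (hdiff : ∀ k < n, ∀ z ∈ unitDisk, DifferentiableAt ℝ (wdzbarOp^[k] w) z)
    (hcont : ∀ k ≤ n, ContinuousOn (wdzbarOp^[k] w) unitDisk)
    (heq : ∀ z ∈ unitDisk, wdzbarOp^[n] w z = 0)
    (hbd : ∀ k < n, ∀ θ₀ : ℝ,
      Tendsto (fun z => (wdzbarOp^[k] w z).re)
        (nhdsWithin (Complex.exp (Complex.I * θ₀)) unitDisk) (nhds 0))
    (him : ∀ k < n, (wdzbarOp^[k] w 0).im = 0) :
    ∀ z ∈ unitDisk, w z = 0 :=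
  higher_schwarz_uniqueness_general n w hdiff heq hbd him
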